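/- Let X ∈ ℝ^{n×d}. The function c₂ : ℝ^n → ℝ defined by c₂(λ) = (1/4)·max{ tr( Z · [[M(λ), M(λ)𝟏],[𝟏ᵀM(λ), 𝟏ᵀM(λ)𝟏]] ) : Z ∈ ℝ^{(n+1)×(n+1)} symmetric, Z ⪰ 0, Z_ii = 1 ∀i }, where M(λ) = diag(λ) X Xᵀ diag(λ), is a convex function of λ. -/

import Mathlib

open Matrix

/-- The solid unit hypercube `[0,1]^n`. -/
def box (n : ℕ) : Set (Fin n → ℝ) := {b | ∀ i, 0 ≤ b i ∧ b i ≤ 1}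

/-- `M(λ) = diag(λ) X Xᵀ diag(λ)`. -/
noncomputable def Mmat {n d : ℕ} (X : Matrix (Fin n) (Fin d) ℝ) (l : Fin n → ℝ) :
    Matrix (Fin n) (Fin n) ℝ :=
  Matrix.diagonal l * X * Xᵀ * Matrix.diagonal l

/-- The block matrix `W = [[M, M𝟏],[𝟏ᵀM, 𝟏ᵀM𝟏]] ∈ ℝ^{(n+1)×(n+1)}`, with index type
`Fin n ⊕ Unit` encoding `{1,…,n} ∪ {n+1}`. -/
noncomputable def Wblock {n : ℕ} (M : Matrix (Fin n) (Fin n) ℝ) :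
    Matrix (Fin n ⊕ Unit) (Fin n ⊕ Unit) ℝ :=
  Matrix.fromBlocks M (Matrix.of fun i _ => ∑ j, M i j)
    (Matrix.of fun _ j => ∑ i, M i j) (Matrix.of fun _ _ => ∑ i, ∑ j, M i j)

/-- `c₁(λ) = max_{b ∈ [0,1]^n} ‖Xᵀ diag(λ) b‖₂²`. -/
noncomputable def c1 {n d : ℕ} (X : Matrix (Fin n) (Fin d) ℝ) (l : Fin n → ℝ) : ℝ :=
  sSup {t : ℝ | ∃ b ∈ box n, t = ∑ k, (∑ i, X i k * l i * b i) ^ 2}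

/-- `c₂(λ) = (1/4)·max { tr(Z W(λ)) : Z ⪰ 0, Z_ii = 1 }`, the SDP relaxation of `c₁`. -/
noncomputable def c2 {n d : ℕ} (X : Matrix (Fin n) (Fin d) ℝ) (l : Fin n → ℝ) : ℝ :=
  (1 / 4) * sSup {t : ℝ | ∃ Z : Matrix (Fin n ⊕ Unit) (Fin n ⊕ Unit) ℝ, Z.PosSemidef ∧
    (∀ i, Z i i = 1) ∧ t = (Z * Wblock (Mmat X l)).trace}

/-- The extension matrix `P = [I; 𝟏ᵀ]`. -/
noncomputable def Pmat (n : ℕ) : Matrix (Fin n ⊕ Unit) (Fin n) ℝ :=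
  Matrix.of fun p j => Sum.elim (fun i => (1 : Matrix (Fin n) (Fin n) ℝ) i j) (fun _ => 1) p

lemma Wblock_eq_Pmat {n : ℕ} (M : Matrix (Fin n) (Fin n) ℝ) :
    Wblock M = Pmat n * M * (Pmat n)ᵀ := by
  ext p q
  cases p <;> cases q <;>
    simp [Wblock, Pmat, Matrix.mul_apply, Matrix.one_apply, ite_mul, mul_ite, Finset.sum_ite_eq,
      Finset.sum_ite_eq', Finset.mul_sum, Finset.sum_mul, Finset.sum_comm (f := fun j k => M j k)]

lemma trace_quad {ι κ : Type*} [Fintype ι] [Fintype κ] (Z : Matrix ι ι ℝ) (U : Matrix ι κ ℝ) :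
    (Z * (U * Uᵀ)).trace = ∑ m, (fun j => U j m) ⬝ᵥ Z *ᵥ (fun j => U j m) := by
  rw [← Matrix.mul_assoc, Matrix.trace_mul_comm]
  simp [Matrix.trace, Matrix.diag, Matrix.mul_apply, dotProduct, Matrix.mulVec,
    Finset.mul_sum, Finset.sum_mul, mul_assoc, mul_comm, mul_left_comm]

lemma quad_convexOn {ι : Type*} [Fintype ι] {Z : Matrix ι ι ℝ} (hZ : Z.PosSemidef)
    {E : Type*} [AddCommGroup E] [Module ℝ E] (φ : E → ι → ℝ)
    (hφ : ∀ (a b : ℝ) (x y : E), φ (a • x + b • y) = a • φ x + b • φ y) :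
    ConvexOn ℝ Set.univ (fun x => φ x ⬝ᵥ Z *ᵥ φ x) := by
  refine ⟨convex_univ, fun x _ y _ a b ha hb hab => ?_⟩
  obtain rfl : b = 1 - a := by linarith
  have key := hZ.dotProduct_mulVec_nonneg (φ x - φ y)
  rw [star_trivial] at key
  simp only [Matrix.mulVec_sub, dotProduct_sub, sub_dotProduct] at key
  simp only [hφ, Matrix.mulVec_add, Matrix.mulVec_smul, dotProduct_add, add_dotProduct,
    dotProduct_smul, smul_dotProduct, smul_eq_mul]
  nlinarith [mul_nonneg ha hb, mul_nonneg (mul_nonneg ha hb) key, key]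

lemma entry_bound {ι : Type*} [Fintype ι] [DecidableEq ι] {Z : Matrix ι ι ℝ}
    (hZ : Z.PosSemidef) (hd : ∀ i, Z i i = 1) (p q : ι) : |Z p q| ≤ 1 := by
  rcases eq_or_ne p q with rfl | h
  · simp [hd p]
  · have hsym : Z q p = Z p q := by
      have := hZ.1.apply p q
      simpa using this
    have h1 := hZ.dotProduct_mulVec_nonneg (Pi.single p 1 + Pi.single q 1)
    have h2 := hZ.dotProduct_mulVec_nonneg (Pi.single p 1 - Pi.single q 1)
    rw [star_trivial] at h1 h2
    simp only [Matrix.mulVec_add, Matrix.mulVec_sub, Matrix.mulVec_single, mul_one,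
      add_dotProduct, sub_dotProduct, dotProduct_add, dotProduct_sub, single_dotProduct,
      one_mul, MulOpposite.op_one, one_smul, Matrix.col_apply] at h1 h2
    rw [abs_le]
    constructor <;> nlinarith [h1, h2, hd p, hd q, hsym]

lemma convexOn_finsum {E ι : Type*} [AddCommGroup E] [Module ℝ E] (t : Finset ι)
    (f : ι → E → ℝ) (h : ∀ i ∈ t, ConvexOn ℝ Set.univ (f i)) :
    ConvexOn ℝ Set.univ (fun x => ∑ i ∈ t, f i x) := by
  classical
  induction t using Finset.induction_on with
  | empty => simpa using convexOn_const (0 : ℝ) convex_univ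
  | insert _ _ hni ih =>
      simp only [Finset.sum_insert hni]
      exact (h _ (Finset.mem_insert_self _ _)).add (ih fun i hi => h i (Finset.mem_insert_of_mem hi))

lemma trace_repr {n d : ℕ} (X : Matrix (Fin n) (Fin d) ℝ)
    (Z : Matrix (Fin n ⊕ Unit) (Fin n ⊕ Unit) ℝ) (l : Fin n → ℝ) :
    (Z * Wblock (Mmat X l)).trace
      = ∑ m, (fun p => ∑ j, Pmat n p j * (l j * X j m)) ⬝ᵥ Z *ᵥ
          (fun p => ∑ j, Pmat n p j * (l j * X j m)) := by
  have hM : Mmat X l = (Matrix.diagonal l * X) * (Matrix.diagonal l * X)ᵀ := by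
    simp [Mmat, Matrix.transpose_mul, Matrix.diagonal_transpose, Matrix.mul_assoc]
  have hW : Wblock (Mmat X l)
      = (Pmat n * (Matrix.diagonal l * X)) * (Pmat n * (Matrix.diagonal l * X))ᵀ := by
    rw [Wblock_eq_Pmat, hM]
    simp [Matrix.transpose_mul, Matrix.mul_assoc]
  rw [hW, trace_quad]
  refine Finset.sum_congr rfl fun m _ => ?_
  have hcol : ∀ p, (Pmat n * (Matrix.diagonal l * X)) p m = ∑ j, Pmat n p j * (l j * X j m) := by
    intro p
    rw [Matrix.mul_apply]
    refine Finset.sum_congr rfl fun j _ => ?_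
    rw [Matrix.diagonal_mul]
  congr 1
  · funext p; exact hcol p
  · funext p
    simp only [Matrix.mulVec]
    congr 1
    funext q
    exact hcol q

/-- The SDP-relaxed dual constraint function `c₂` is a convex function of `λ`. -/
theorem stmt14 (n d : ℕ) (X : Matrix (Fin n) (Fin d) ℝ) :
    ConvexOn ℝ Set.univ (fun l : Fin n → ℝ => c2 X l) := by
  set S : (Fin n → ℝ) → Set ℝ := fun l =>
    {t : ℝ | ∃ Z : Matrix (Fin n ⊕ Unit) (Fin n ⊕ Unit) ℝ, Z.PosSemidef ∧
      (∀ i, Z i i = 1) ∧ t = (Z * Wblock (Mmat X l)).trace} with hS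
  have hne : ∀ l, (S l).Nonempty := fun l =>
    ⟨((1 : Matrix (Fin n ⊕ Unit) (Fin n ⊕ Unit) ℝ) * Wblock (Mmat X l)).trace,
      1, Matrix.PosSemidef.one, fun i => Matrix.one_apply_eq i, rfl⟩
  have hbdd : ∀ l, BddAbove (S l) := by
    intro l
    refine ⟨∑ p, ∑ q, |Wblock (Mmat X l) q p|, ?_⟩
    rintro t ⟨Z, hZ, hdiag, rfl⟩
    rw [Matrix.trace]
    calc ∑ p, (Z * Wblock (Mmat X l)).diag p
        = ∑ p, ∑ q, Z p q * Wblock (Mmat X l) q p := by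
          simp [Matrix.diag, Matrix.mul_apply]
      _ ≤ ∑ p, ∑ q, |Wblock (Mmat X l) q p| := by
          refine Finset.sum_le_sum fun p _ => Finset.sum_le_sum fun q _ => ?_
          calc Z p q * Wblock (Mmat X l) q p ≤ |Z p q * Wblock (Mmat X l) q p| := le_abs_self _
            _ = |Z p q| * |Wblock (Mmat X l) q p| := abs_mul _ _
            _ ≤ 1 * |Wblock (Mmat X l) q p| := by
                have := entry_bound hZ hdiag p q
                exact mul_le_mul_of_nonneg_right this (abs_nonneg _)
            _ = |Wblock (Mmat X l) q p| := one_mul _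
  have hconv : ∀ Z : Matrix (Fin n ⊕ Unit) (Fin n ⊕ Unit) ℝ, Z.PosSemidef →
      ConvexOn ℝ Set.univ (fun l : Fin n → ℝ => (Z * Wblock (Mmat X l)).trace) := by
    intro Z hZ
    have hrw : (fun l : Fin n → ℝ => (Z * Wblock (Mmat X l)).trace)
        = fun l : Fin n → ℝ => ∑ m, (fun p => ∑ j, Pmat n p j * (l j * X j m)) ⬝ᵥ Z *ᵥ
            (fun p => ∑ j, Pmat n p j * (l j * X j m)) := by
      funext l; exact trace_repr X Z l
    rw [hrw]
    refine convexOn_finsum _ _ fun m _ => ?_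
    refine quad_convexOn hZ (fun (l : Fin n → ℝ) (p : Fin n ⊕ Unit) => ∑ j, Pmat n p j * (l j * X j m)) ?_
    intro a b x y
    funext p
    simp only [Pi.add_apply, Pi.smul_apply, smul_eq_mul, Finset.mul_sum]
    rw [← Finset.sum_add_distrib]
    refine Finset.sum_congr rfl fun j _ => ?_
    ring
  have hsup : ConvexOn ℝ Set.univ (fun l : Fin n → ℝ => sSup (S l)) := by
    refine ⟨convex_univ, fun x _ y _ a b ha hb hab => ?_⟩
    refine csSup_le (hne _) ?_
    rintro t ⟨Z, hZ, hdiag, rfl⟩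
    have h1 : ((Z * Wblock (Mmat X (a • x + b • y))).trace)
        ≤ a * (Z * Wblock (Mmat X x)).trace + b * (Z * Wblock (Mmat X y)).trace := by
      have := (hconv Z hZ).2 (Set.mem_univ x) (Set.mem_univ y) ha hb hab
      simpa using this
    have h2 : (Z * Wblock (Mmat X x)).trace ≤ sSup (S x) :=
      le_csSup (hbdd x) ⟨Z, hZ, hdiag, rfl⟩
    have h3 : (Z * Wblock (Mmat X y)).trace ≤ sSup (S y) :=
      le_csSup (hbdd y) ⟨Z, hZ, hdiag, rfl⟩
    have := add_le_add (mul_le_mul_of_nonneg_left h2 ha) (mul_le_mul_of_nonneg_left h3 hb)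
    simp only [smul_eq_mul]
    linarith
  have h4 : ConvexOn ℝ Set.univ (fun l : Fin n → ℝ => (1 / 4 : ℝ) • sSup (S l)) :=
    hsup.smul (by norm_num)
  simpa [c2, smul_eq_mul, hS] using h4
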